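/- For positive integers k and n, lim_{α→0} C(n+α-1, n) · ζ_n({1}_k; α) = ζ_{n-1}({1}_{k-1}) / n, where C(n+α-1,n) = (α)_n/n!, ζ_n({1}_k; α) = Σ_{n ≥ n_1 > ... > n_k ≥ 1} Π_j 1/(n_j+α-1), and ζ_{n-1}({1}_{k-1}) = Σ_{n-1 ≥ n_1 > ... > n_{k-1} ≥ 1} Π_j 1/n_j. -/

import Mathlib

/-- Pochhammer symbol `(α)_n = α(α+1)⋯(α+n-1)`. -/
noncomputable def poch (α : ℂ) (n : ℕ) : ℂ := ∏ i ∈ Finset.range n, (α + i)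

/-- Generalized binomial coefficient `C(a,b) = Γ(a+1)/(Γ(b+1)Γ(a-b+1))`. -/
noncomputable def cbinom (a b : ℂ) : ℂ :=
  Complex.Gamma (a + 1) / (Complex.Gamma (b + 1) * Complex.Gamma (a - b + 1))

/-- Hurwitz-type multiple harmonic sum `ζ_n({1}_k; a)`. -/
noncomputable def hmhs (a : ℂ) : ℕ → ℕ → ℂ
  | _, 0 => 1
  | n, k + 1 => ∑ j ∈ Finset.Icc 1 n, (1 / ((j : ℂ) + a - 1)) * hmhs a (j - 1) k
  termination_by n k => k

/-- Hurwitz-type multiple harmonic star sum `ζ_n^⋆({1}_k; a)`. -/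
noncomputable def hmhsStar (a : ℂ) : ℕ → ℕ → ℂ
  | _, 0 => 1
  | n, k + 1 => ∑ j ∈ Finset.Icc 1 n, (1 / ((j : ℂ) + a - 1)) * hmhsStar a j k
  termination_by n k => k

/-- Power sum `Σ_{j=1}^n 1/(j+a-1)^s`. -/
noncomputable def psum (a : ℂ) (n s : ℕ) : ℂ := ∑ j ∈ Finset.Icc 1 n, (1 / ((j : ℂ) + a - 1)) ^ s

/-!
Splitting off the term `n₁ = 1`, which is `1/α`, and shifting the remaining indices down by one
gives `ζ_{m+1}({1}_{k+1}; α) = ζ_m({1}_{k+1}; α+1) + α⁻¹ ζ_m({1}_k; α+1)`, while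
`(α)_{m+1} = α (α+1)_m`. Hence for `α ≠ 0` the product equals
`(α (α+1)_m ζ_m({1}_{k+1}; α+1) + (α+1)_m ζ_m({1}_k; α+1)) / (m+1)!`, which is continuous at
`α = 0` with value `m! ζ_m({1}_k) / (m+1)!`.
-/

open Finset Filter Topology

lemma hmhs_zero_right (a : ℂ) (n : ℕ) : hmhs a n 0 = 1 := by
  rw [hmhs]

lemma hmhs_succ_right (a : ℂ) (n k : ℕ) :
    hmhs a n (k + 1) = ∑ i ∈ range n, (a + i)⁻¹ * hmhs a i k := by
  rw [hmhs, ← Ico_add_one_right_eq_Icc, sum_Ico_eq_sum_range, Nat.add_sub_cancel]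
  refine sum_congr rfl fun i _ => ?_
  rw [Nat.add_sub_cancel_left, one_div]
  push_cast
  ring_nf

lemma hmhs_succ_succ (a : ℂ) (n k : ℕ) :
    hmhs a (n + 1) (k + 1) = hmhs (a + 1) n (k + 1) + a⁻¹ * hmhs (a + 1) n k := by
  induction k generalizing n with
  | zero =>
    simp only [hmhs_succ_right, hmhs_zero_right, mul_one, sum_range_succ', add_assoc]
    push_cast
    simp only [add_zero, add_comm (1 : ℂ)]
  | succ k ih =>
    rw [hmhs_succ_right a, sum_range_succ', hmhs_succ_right a 0, sum_range_zero, mul_zero,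
      add_zero, hmhs_succ_right, hmhs_succ_right, mul_sum, ← sum_add_distrib]
    refine sum_congr rfl fun i _ => ?_
    rw [ih]
    push_cast
    ring_nf

lemma continuousAt_hmhs {a : ℂ} {n : ℕ} (ha : ∀ j < n, a + j ≠ 0) (k : ℕ) :
    ContinuousAt (fun b => hmhs b n k) a := by
  induction k generalizing n with
  | zero => simp only [hmhs_zero_right]; exact continuousAt_const
  | succ k ih =>
    simp only [hmhs_succ_right]
    refine tendsto_finsetSum _ fun i hi => ?_
    have hi : i < n := mem_range.mp hi
    exact ((continuousAt_id.add continuousAt_const).inv₀ (ha i hi)).mul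
      (ih fun j hj => ha j (hj.trans hi))

lemma poch_succ (a : ℂ) (n : ℕ) : poch a (n + 1) = a * poch (a + 1) n := by
  rw [poch, prod_range_succ', poch, mul_comm]
  push_cast
  simp only [add_zero, add_assoc, add_comm (1 : ℂ)]

lemma poch_one (n : ℕ) : poch 1 n = n.factorial := by
  rw [poch, ← prod_range_add_one_eq_factorial]
  push_cast
  simp only [add_comm (1 : ℂ)]

lemma continuous_poch (n : ℕ) : Continuous fun a => poch a n :=
  continuous_finsetProd _ fun _ _ => by fun_prop

theorem tendsto_binom_mul_hmhs (n k : ℕ) (hn : 1 ≤ n) (hk : 1 ≤ k) :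
    Filter.Tendsto (fun α : ℂ => (poch α n / (n.factorial : ℂ)) * hmhs α n k)
      (nhdsWithin 0 {(0 : ℂ)}ᶜ)
      (nhds (hmhs 1 (n - 1) (k - 1) / (n : ℂ))) := by
  obtain ⟨m, rfl⟩ : ∃ m, n = m + 1 := ⟨n - 1, by omega⟩
  obtain ⟨k, rfl⟩ : ∃ l, k = l + 1 := ⟨k - 1, by omega⟩
  simp only [Nat.add_sub_cancel]
  set g : ℂ → ℂ := fun α => (α * poch (α + 1) m * hmhs (α + 1) m (k + 1)
    + poch (α + 1) m * hmhs (α + 1) m k) / (m + 1).factorial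
  have hg_eq : ∀ α ≠ 0, (poch α (m + 1) / (m + 1).factorial) * hmhs α (m + 1) (k + 1) = g α := by
    intro α hα
    rw [poch_succ, hmhs_succ_succ]
    field_simp
    ring
  have hg_zero : g 0 = hmhs 1 m k / ((m + 1 : ℕ) : ℂ) := by
    simp only [g, zero_add, zero_mul, poch_one, Nat.factorial_succ]
    have := m.factorial_ne_zero
    push_cast
    field_simp
  have hg_cont : ContinuousAt g 0 := by
    have hshift : ∀ k, ContinuousAt (fun α : ℂ => hmhs (α + 1) m k) 0 := fun k =>
      (continuousAt_hmhs (fun j _ => by norm_cast; omega) k).comp_of_eq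
        (continuousAt_id.add continuousAt_const) (zero_add 1)
    have hpoch : ContinuousAt (fun α : ℂ => poch (α + 1) m) 0 :=
      ((continuous_poch m).comp (continuous_add_const 1)).continuousAt
    exact (((continuousAt_id.mul hpoch).mul (hshift _)).add (hpoch.mul (hshift _))).div_const _
  rw [← hg_zero]
  refine (hg_cont.tendsto.mono_left nhdsWithin_le_nhds).congr' ?_
  filter_upwards [self_mem_nhdsWithin] with α hα
  exact (hg_eq α hα).symm
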